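/- arXiv:2307.02560 — 4 statements merged into one kernel-verified Lean document; each statement's English description precedes it below -/
import Mathlib

section
/- For a tuple of r points Z in projective n-space in general position, the Hilbert function of S/I(Z) at degree t equals the minimum of binom(n+t, n) and r. In particular, for all t, h_{S/I(Z)}(t) ≤ min(binom(n+t,n), r). -/
open MvPolynomial

/-- The Hilbert function `t ↦ dim_k (S/I)_t` of the quotient of `S = k[x₀,…,xₙ]` by a
homogeneous ideal `I`, computed as `dim_k S_t - dim_k I_t`. -/
noncomputable def hilbFn (k : Type) [Field k] {n : ℕ} (I : Ideal (MvPolynomial (Fin (n + 1)) k))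
    (t : ℕ) : ℕ :=
  Module.finrank k (homogeneousSubmodule (Fin (n + 1)) k t) -
    Module.finrank k (Submodule.restrictScalars k I ⊓ homogeneousSubmodule (Fin (n + 1)) k t :
      Submodule k (MvPolynomial (Fin (n + 1)) k))

/-- The homogeneous vanishing ideal of a tuple of points of `ℙⁿ`, the points being represented
by nonzero vectors in `k^{n+1}`. -/
noncomputable def vanishingIdealPts (k : Type) [Field k] {n r : ℕ}
    (Z : Fin r → (Fin (n + 1) → k)) : Ideal (MvPolynomial (Fin (n + 1)) k) :=
  Ideal.span {f | (∃ m, f.IsHomogeneous m) ∧ ∀ i, eval (Z i) f = 0}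

/-!
The Hilbert function of `S/I(Z)` in degree `t` is the rank of the evaluation map `S_t → k^r` at
the points, hence at most `min (dim S_t) r`. For a fixed `t`, there are `m = min (dim S_t) r`
points and forms of degree `t` whose evaluation matrix is the identity; the corresponding
`m × m` minor, read as a polynomial in the coordinates of the points, is therefore nonzero, and
wherever it does not vanish the rank is full. This handles the degrees `t ≤ r`. Beyond them
`min (C(n+t,n)) r` is constant, and the rank is nondecreasing in `t` as soon as no point lies on
the hyperplane `x₀ = 0`: multiplication by `x₀` maps `S_t` to `S_{t+1}` and rescales the values
at the points by nonzero factors. The generic condition is the product of all these minors and of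
the coordinates `x₀` of the points.
-/

open Module LinearMap

theorem linearIndependent_of_det_ne_zero {K V m : Type*} [Field K] [AddCommGroup V] [Module K V]
    [Fintype m] [DecidableEq m] {v : m → V} (φ : m → Dual K V)
    (h : (Matrix.of fun a b => φ b (v a)).det ≠ 0) : LinearIndependent K v :=
  LinearIndependent.of_comp (LinearMap.pi φ) (Matrix.linearIndependent_rows_of_det_ne_zero h)

theorem Nat.min_add_choose_eq_of_le {n r t : ℕ} (h : r ≤ t) :
    min ((n + t).choose n) r = min ((n + r).choose n) r := by
  rcases Nat.eq_zero_or_pos n with rfl | hn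
  · simp
  · have hr : ∀ s, r ≤ s → r ≤ (n + s).choose n := fun s hs => calc
      r ≤ (s + 1).choose s := by rw [Nat.choose_succ_self_right]; omega
      _ ≤ (n + s).choose s := Nat.choose_le_choose s (by omega)
      _ = (n + s).choose n := Nat.choose_symm_add.symm
    rw [min_eq_right (hr t h), min_eq_right (hr r le_rfl)]

namespace MvPolynomial

section

variable {σ ι k : Type*} [Field k]

instance [Finite σ] (t : ℕ) : FiniteDimensional k (homogeneousSubmodule σ k t) :=
  Module.Finite.iff_fg.mpr (homogeneousSubmodule_fg σ k t)

theorem finrank_homogeneousSubmodule [Fintype σ] (t : ℕ) :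
    finrank k (homogeneousSubmodule σ k t) = (Fintype.card σ + t - 1).choose t := by
  classical
  rw [homogeneousSubmodule_eq_finsupp_supported]
  refine (finrank_eq_nat_card_basis (basisRestrictSupport k {d : σ →₀ ℕ | d.degree = t})).trans ?_
  rw [← Nat.card_eq_fintype_card, ← Sym.natCard_sym_eq_choose]
  exact Nat.card_congr
    ((Equiv.subtypeEquivRight fun _ => Iff.rfl).trans (Sym.equivNatSum σ t).symm)

theorem finrank_homogeneousSubmodule_fin (n t : ℕ) :
    finrank k (homogeneousSubmodule (Fin (n + 1)) k t) = (n + t).choose n := by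
  rw [finrank_homogeneousSubmodule, Fintype.card_fin, Nat.add_right_comm, Nat.add_sub_cancel,
    Nat.choose_symm_add]

noncomputable def evalAt (Z : ι → σ → k) : MvPolynomial σ k →ₗ[k] ι → k :=
  LinearMap.pi fun i => (aeval (Z i)).toLinearMap

@[simp]
theorem evalAt_apply (Z : ι → σ → k) (f : MvPolynomial σ k) (i : ι) :
    evalAt Z f i = eval (Z i) f :=
  rfl

noncomputable def homogeneousEval (Z : ι → σ → k) (t : ℕ) :
    homogeneousSubmodule σ k t →ₗ[k] ι → k :=
  (evalAt Z).domRestrict _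

@[simp]
theorem homogeneousEval_apply (Z : ι → σ → k) (t : ℕ) (f : homogeneousSubmodule σ k t)
    (i : ι) : homogeneousEval Z t f i = eval (Z i) (f : MvPolynomial σ k) :=
  rfl

theorem finrank_range_homogeneousEval_le [Fintype σ] [Fintype ι] (Z : ι → σ → k) (t : ℕ) :
    finrank k (range (homogeneousEval Z t)) ≤
      min (finrank k (homogeneousSubmodule σ k t)) (Fintype.card ι) :=
  le_min (finrank_range_le _) ((Submodule.finrank_le _).trans_eq (finrank_fintype_fun_eq_card k))

theorem le_finrank_range_homogeneousEval [Finite ι] {m : ℕ} (Z : ι → σ → k) {t : ℕ}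
    (f : Fin m → homogeneousSubmodule σ k t) (e : Fin m → ι)
    (h : (Matrix.of fun a b => eval (Z (e b)) (f a : MvPolynomial σ k)).det ≠ 0) :
    m ≤ finrank k (range (homogeneousEval Z t)) := by
  have hli : LinearIndependent k (homogeneousEval Z t ∘ f) :=
    linearIndependent_of_det_ne_zero (fun b => LinearMap.proj (e b)) h
  calc m = finrank k (Submodule.span k (Set.range (homogeneousEval Z t ∘ f))) := by
        rw [finrank_span_eq_card hli, Fintype.card_fin]
    _ ≤ finrank k (range (homogeneousEval Z t)) :=
        Submodule.finrank_mono (Submodule.span_le.mpr (Set.range_comp_subset_range _ _))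

theorem finrank_range_homogeneousEval_le_add [Finite σ] (Z : ι → σ → k)
    {ℓ : MvPolynomial σ k} {d : ℕ} (hℓ : ℓ.IsHomogeneous d) (hZ : ∀ i, eval (Z i) ℓ ≠ 0)
    (t : ℕ) :
    finrank k (range (homogeneousEval Z t)) ≤ finrank k (range (homogeneousEval Z (t + d))) := by
  let μ : homogeneousSubmodule σ k t →ₗ[k] homogeneousSubmodule σ k (t + d) :=
    (LinearMap.mulRight k ℓ).restrict fun f hf => by
      simpa using ((mem_homogeneousSubmodule _ _).mp hf).mul hℓ
  let D := LinearMap.mulRight k fun i => eval (Z i) ℓ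
  have hD : Function.Injective D := fun u v huv =>
    _root_.funext fun i => mul_right_cancel₀ (hZ i) (by simpa [D] using congrFun huv i)
  have hμ : (homogeneousEval Z (t + d)).comp μ = D.comp (homogeneousEval Z t) := by
    ext f i
    simp [μ, D]
  calc finrank k (range (homogeneousEval Z t))
      = finrank k (range (D.comp (homogeneousEval Z t))) := by
        rw [range_comp]
        exact (Submodule.equivMapOfInjective _ hD _).finrank_eq
    _ ≤ finrank k (range (homogeneousEval Z (t + d))) := by
        rw [← hμ]
        exact Submodule.finrank_mono (range_comp_le_range _ _)

theorem exists_dual_family [Infinite k] (V : Submodule k (MvPolynomial σ k))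
    [FiniteDimensional k V] {m : ℕ} (hm : m ≤ finrank k V) :
    ∃ (w : Fin m → σ → k) (f : Fin m → V),
      ∀ a b, eval (w b) (f a : MvPolynomial σ k) = if a = b then 1 else 0 := by
  induction m with
  | zero => exact ⟨Fin.elim0, Fin.elim0, fun a => a.elim0⟩
  | succ m ih =>
    obtain ⟨w, f, hwf⟩ := ih (Nat.le_of_succ_le hm)
    obtain ⟨g, hg, hg0⟩ := Submodule.ne_bot_iff _ |>.mp <|
      ker_ne_bot_of_finrank_lt (f := (evalAt w).domRestrict V) (by simpa using hm)
    obtain ⟨z, hz⟩ : ∃ z, eval z (g : MvPolynomial σ k) ≠ 0 := by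
      by_contra! h
      exact hg0 (Subtype.ext (MvPolynomial.funext fun x => by simp [h x]))
    set p := (eval z (g : MvPolynomial σ k))⁻¹ • g
    have hpw : ∀ b, eval (w b) (p : MvPolynomial σ k) = 0 := fun b => by
      simp [p, smul_eval, show eval (w b) (g : MvPolynomial σ k) = 0 from congrFun hg b]
    have hpz : eval z (p : MvPolynomial σ k) = 1 := by simp [p, smul_eval, hz]
    refine ⟨Fin.cons z w, Fin.cons p fun a => f a - eval z (f a : MvPolynomial σ k) • p, ?_⟩
    intro a b
    cases a using Fin.cases <;> cases b using Fin.cases <;>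
      simp [hwf, hpw, hpz, smul_eval, (Fin.succ_ne_zero _).symm]

theorem exists_generic_min_le_finrank_range [Infinite k] [Fintype σ] [Fintype ι] (t : ℕ) :
    ∃ g : MvPolynomial (ι × σ) k, g ≠ 0 ∧
      ∀ Z : ι → σ → k, eval (fun p => Z p.1 p.2) g ≠ 0 →
        min (finrank k (homogeneousSubmodule σ k t)) (Fintype.card ι) ≤
          finrank k (range (homogeneousEval Z t)) := by
  classical
  set m := min (finrank k (homogeneousSubmodule σ k t)) (Fintype.card ι)
  obtain ⟨w, f, hwf⟩ := exists_dual_family (homogeneousSubmodule σ k t) (min_le_left _ _)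
  obtain ⟨e⟩ : Nonempty (Fin m ↪ ι) := Function.Embedding.nonempty_of_card_le (by simp [m])
  let Q : Matrix (Fin m) (Fin m) (MvPolynomial (ι × σ) k) :=
    Matrix.of fun a b => rename (Prod.mk (e b)) (f a : MvPolynomial σ k)
  have heval : ∀ Z : ι → σ → k, eval (fun p => Z p.1 p.2) Q.det =
      (Matrix.of fun a b => eval (Z (e b)) (f a : MvPolynomial σ k)).det := fun Z => by
    rw [RingHom.map_det]
    congr 1
    ext a b
    simp only [Q, RingHom.mapMatrix_apply, Matrix.map_apply, Matrix.of_apply, eval_rename]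
    rfl
  refine ⟨Q.det, fun hQ => ?_, fun Z hZ => le_finrank_range_homogeneousEval Z f e ?_⟩
  · have hone : (Matrix.of fun a b =>
        eval (Function.extend e w 0 (e b)) (f a : MvPolynomial σ k)) = 1 := by
      ext a b
      simp [e.injective.extend_apply, hwf, Matrix.one_apply]
    simpa [hQ, hone] using heval (Function.extend e w 0)
  · rwa [← heval]

end

section

variable {k : Type} [Field k]

theorem restrictScalars_vanishingIdealPts_inf {n r : ℕ} (Z : Fin r → Fin (n + 1) → k)
    (t : ℕ) :
    (Submodule.restrictScalars k (vanishingIdealPts k Z) ⊓ homogeneousSubmodule (Fin (n + 1)) k t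
      : Submodule k (MvPolynomial (Fin (n + 1)) k)) =
      ker (evalAt Z) ⊓ homogeneousSubmodule (Fin (n + 1)) k t := by
  refine le_antisymm (inf_le_inf_right _ fun f hf => ?_) fun f ⟨hf, hft⟩ => ⟨?_, hft⟩
  · have hle : vanishingIdealPts k Z ≤ ⨅ i, RingHom.ker (eval (Z i)) :=
      Ideal.span_le.mpr fun g hg => Ideal.mem_iInf.mpr fun i => hg.2 i
    have hfZ := Ideal.mem_iInf.mp (hle ((Submodule.restrictScalars_mem k _ f).mp hf))
    rw [mem_ker]
    ext i
    rw [evalAt_apply]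
    exact RingHom.mem_ker.mp (hfZ i)
  · exact Ideal.subset_span ⟨⟨t, hft⟩, fun i => congrFun (mem_ker.mp hf) i⟩

theorem hilbFn_vanishingIdealPts {n r : ℕ} (Z : Fin r → Fin (n + 1) → k) (t : ℕ) :
    hilbFn k (vanishingIdealPts k Z) t = finrank k (range (homogeneousEval Z t)) := by
  have hker : finrank k (ker (homogeneousEval Z t)) =
      finrank k (ker (evalAt Z) ⊓ homogeneousSubmodule (Fin (n + 1)) k t :
        Submodule k (MvPolynomial (Fin (n + 1)) k)) := by
    rw [homogeneousEval, ker_domRestrict, inf_comm, ← Submodule.map_comap_subtype,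
      Submodule.finrank_map_subtype_eq]
  have := (homogeneousEval Z t).finrank_range_add_finrank_ker
  rw [hilbFn, restrictScalars_vanishingIdealPts_inf, ← hker]
  omega

end

theorem exists_generic_min_choose_le_finrank_range (k : Type*) [Field k] [Infinite k]
    (n r : ℕ) :
    ∃ g : MvPolynomial (Fin r × Fin (n + 1)) k, g ≠ 0 ∧ ∀ Z : Fin r → Fin (n + 1) → k,
      eval (fun p => Z p.1 p.2) g ≠ 0 →
        ∀ t, min ((n + t).choose n) r ≤ finrank k (range (homogeneousEval Z t)) := by
  choose G hG0 hG using fun t =>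
    exists_generic_min_le_finrank_range (k := k) (σ := Fin (n + 1)) (ι := Fin r) t
  refine ⟨(∏ i, X (i, 0)) * ∏ t ∈ Finset.range (r + 1), G t,
    mul_ne_zero (Finset.prod_ne_zero_iff.mpr fun i _ => X_ne_zero _)
      (Finset.prod_ne_zero_iff.mpr fun t _ => hG0 t), fun Z hZ => ?_⟩
  simp only [map_mul, map_prod, eval_X, mul_ne_zero_iff, Finset.prod_ne_zero_iff,
    Finset.mem_univ, Finset.mem_range, true_implies] at hZ
  obtain ⟨hZ0, hZG⟩ := hZ
  have hlow : ∀ t ≤ r, min ((n + t).choose n) r ≤ finrank k (range (homogeneousEval Z t)) :=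
    fun t ht => by simpa [finrank_homogeneousSubmodule_fin] using hG t Z (hZG t (by omega))
  have hmono : Monotone fun t => finrank k (range (homogeneousEval Z t)) :=
    monotone_nat_of_le_succ fun t =>
      finrank_range_homogeneousEval_le_add Z (isHomogeneous_X k 0) (by simpa using hZ0) t
  intro t
  rcases le_total t r with htr | hrt
  · exact hlow t htr
  · rw [Nat.min_add_choose_eq_of_le hrt]
    exact (hlow r le_rfl).trans (hmono hrt)

end MvPolynomial

theorem generic_hilbert_function_points_general (k : Type) [Field k] [CharZero k]
    (n r : ℕ) :
    (∃ g : MvPolynomial (Fin r × Fin (n + 1)) k, g ≠ 0 ∧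
      ∀ Z : Fin r → (Fin (n + 1) → k), (∀ i, Z i ≠ 0) →
        eval (fun p => Z p.1 p.2) g ≠ 0 →
        ∀ t, hilbFn k (vanishingIdealPts k Z) t = min (Nat.choose (n + t) n) r) ∧
    ∀ Z : Fin r → (Fin (n + 1) → k), (∀ i, Z i ≠ 0) →
      ∀ t, hilbFn k (vanishingIdealPts k Z) t ≤ min (Nat.choose (n + t) n) r := by
  have hupper : ∀ (Z : Fin r → Fin (n + 1) → k) t,
      hilbFn k (vanishingIdealPts k Z) t ≤ min ((n + t).choose n) r := fun Z t => by
    simpa [hilbFn_vanishingIdealPts, finrank_homogeneousSubmodule_fin]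
      using finrank_range_homogeneousEval_le Z t
  obtain ⟨g, hg0, hg⟩ := exists_generic_min_choose_le_finrank_range k n r
  refine ⟨⟨g, hg0, fun Z _ hgZ t => (hupper Z t).antisymm ?_⟩, fun Z _ => hupper Z⟩
  exact hilbFn_vanishingIdealPts Z t ▸ hg Z hgZ t

/-- For a tuple of `r` points of `ℙⁿ` in general position (genericity being expressed by the
nonvanishing of some nonzero polynomial `g` in the homogeneous coordinates of the points), the
Hilbert function of `S/I(Z)` at `t` equals `min (C(n+t, n)) r`; moreover for *every* tuple of
points the Hilbert function is at most this value. -/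
theorem generic_hilbert_function_points (k : Type) [Field k] [IsAlgClosed k] [CharZero k]
    (n r : ℕ) :
    (∃ g : MvPolynomial (Fin r × Fin (n + 1)) k, g ≠ 0 ∧
      ∀ Z : Fin r → (Fin (n + 1) → k), (∀ i, Z i ≠ 0) →
        eval (fun p => Z p.1 p.2) g ≠ 0 →
        ∀ t, hilbFn k (vanishingIdealPts k Z) t = min (Nat.choose (n + t) n) r) ∧
    ∀ Z : Fin r → (Fin (n + 1) → k), (∀ i, Z i ≠ 0) →
      ∀ t, hilbFn k (vanishingIdealPts k Z) t ≤ min (Nat.choose (n + t) n) r :=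
  generic_hilbert_function_points_general k n r
end

section
/- Let F ∈ T_D be a homogeneous polynomial and let Z = (z_1,...,z_r) be points of P^n with F = Σ c_i (z_i · y)^D for constants c_i (apolarity lemma direction): then the vanishing ideal I(Z) ⊆ S is contained in the apolar ideal Ann(F) = {f ∈ S : f(∂_0,...,∂_n) F = 0}. Conversely, if I(Z) ⊆ Ann(F) then F admits such a Waring decomposition supported on Z. -/
/-!
`f ↦ f(∂)` is an algebra map into the commutative algebra of constant-coefficient differential
operators, and for `f` homogeneous of degree `e`, `f(∂)(z·y)^D = D!/(D-e)! · f(z) · (z·y)^(D-e)`.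
So a form vanishing on `Z` kills every `(zᵢ·y)^D`, and since `Ann(F)` is an ideal, `I(Z) ⊆ Ann(F)`
whenever `F` is a combination of them.

Conversely, the pairing `⟨f, G⟩ = f(∂)G` is perfect on forms of degree `D`: distinct monomials are
orthogonal and `⟨y^α, y^α⟩ = α!`, which is nonzero in characteristic `0`. A functional vanishing
on all `(zᵢ·y)^D` is therefore `⟨f, ·⟩` for a form `f` of degree `D` with `D! · f(zᵢ) = 0`, so
`f ∈ I(Z) ⊆ Ann(F)` and the functional vanishes on `F`; hence `F` lies in the span of the
`(zᵢ·y)^D`.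
-/

open MvPolynomial

/-- The differential operator `f(∂₀,…,∂ₙ)` associated to a polynomial `f`, applied to `F`:
each monomial `c·x^α` of `f` acts as `c·∂^α`. -/
noncomputable def diffOp (k : Type) [Field k] {n : ℕ} (f F : MvPolynomial (Fin (n + 1)) k) :
    MvPolynomial (Fin (n + 1)) k :=
  (AddMonoidAlgebra.coeff f).sum fun m c => c •
    ((List.ofFn fun i : Fin (n + 1) =>
      ((⇑(pderiv i) : MvPolynomial (Fin (n + 1)) k → MvPolynomial (Fin (n + 1)) k))^[m i]).foldr
        (· ∘ ·) id) F

theorem Module.End.coe_list_prod {R M : Type*} [Semiring R] [AddCommMonoid M] [Module R M]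
    (l : List (Module.End R M)) : ⇑l.prod = (l.map (⇑)).foldr (· ∘ ·) id := by
  induction l with
  | nil => rfl
  | cons a l ih => rw [List.prod_cons, Module.End.coe_mul, ih]; rfl

namespace MvPolynomial

section CommSemiring

variable {R : Type*} [CommSemiring R] {σ : Type*}

theorem pderiv_comm (i j : σ) (p : MvPolynomial σ R) :
    pderiv i (pderiv j p) = pderiv j (pderiv i p) := by
  classical
  induction p using MvPolynomial.induction_on' with
  | monomial s a =>
    simp only [pderiv_monomial]
    rcases eq_or_ne i j with rfl | hij
    · rfl
    · rw [Finsupp.tsub_apply, Finsupp.tsub_apply, Finsupp.single_apply, Finsupp.single_apply,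
        if_neg hij, if_neg (Ne.symm hij), tsub_zero, tsub_zero, tsub_tsub, tsub_tsub,
        add_comm (Finsupp.single j 1), mul_assoc, mul_assoc, mul_comm (s j : R)]
  | add p q hp hq => simp [hp, hq]

theorem IsHomogeneous.degree_eq_of_mem_support {f : MvPolynomial σ R} {e : ℕ}
    (hf : f.IsHomogeneous e) {m : σ →₀ ℕ} (hm : m ∈ f.support) : m.degree = e := by
  by_contra h
  exact mem_support_iff.mp hm (hf.coeff_eq_zero h)

theorem pderiv_pow_apply_monomial (i : σ) (k : ℕ) (s : σ →₀ ℕ) (c : R) :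
    ((pderiv i).toLinearMap ^ k) (monomial s c) =
      monomial (s - Finsupp.single i k) ((s i).descFactorial k * c) := by
  induction k with
  | zero => simp
  | succ k ih =>
    rw [pow_succ', Module.End.mul_apply, ih, Derivation.coeFn_coe, pderiv_monomial,
      tsub_tsub, ← Finsupp.single_add, Nat.descFactorial_succ, Finsupp.tsub_apply,
      Finsupp.single_eq_same]
    push_cast
    congr 1
    ring

open scoped IsMulCommutative in
variable (R σ) in
/-- `f ↦ f(∂)`: `aeval` into the subalgebra of `Module.End` generated by the partial derivatives,
which is commutative by `pderiv_comm`. -/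
noncomputable def diffOperator : MvPolynomial σ R →ₐ[R] Module.End R (MvPolynomial σ R) :=
  let d : σ → Module.End R (MvPolynomial σ R) := fun i => (pderiv i).toLinearMap
  haveI := Algebra.isMulCommutative_adjoin R (s := Set.range d) <| by
    rintro _ ⟨i, rfl⟩ _ ⟨j, rfl⟩
    exact LinearMap.ext (pderiv_comm i j)
  (Algebra.adjoin R (Set.range d)).val.comp
    (aeval (R := R) (S₁ := Algebra.adjoin R (Set.range d))
      fun i => ⟨d i, Algebra.subset_adjoin ⟨i, rfl⟩⟩)

theorem diffOperator_X (i : σ) : diffOperator R σ (X i) = (pderiv i).toLinearMap := by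
  simp [diffOperator]

theorem diffOperator_monomial_single_add (i : σ) (b : ℕ) (m : σ →₀ ℕ) (a : R) :
    diffOperator R σ (monomial (Finsupp.single i b + m) a) =
      (pderiv i).toLinearMap ^ b * diffOperator R σ (monomial m a) := by
  rw [monomial_single_add, map_mul, map_pow, diffOperator_X]

theorem diffOperator_monomial_one {N : ℕ} (m : Fin N →₀ ℕ) :
    ⇑(diffOperator R (Fin N) (monomial m 1)) =
      (List.ofFn fun i => (⇑(pderiv i : Derivation R _ _))^[m i]).foldr (· ∘ ·) id := by
  rw [monomial_eq, C_1, one_mul, Finsupp.prod_fintype _ _ fun _ => pow_zero _, ← List.prod_ofFn,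
    map_list_prod, Module.End.coe_list_prod, List.map_ofFn, List.map_ofFn]
  simp [Function.comp_def, Module.End.coe_pow, diffOperator_X]

theorem diffOperator_monomial_apply_monomial (m s : σ →₀ ℕ) (a c : R) :
    diffOperator R σ (monomial m a) (monomial s c) =
      monomial (s - m) ((m.prod fun i e => (s i).descFactorial e : ℕ) * a * c) := by
  induction m using Finsupp.induction with
  | zero => simp [Algebra.algebraMap_eq_smul_one, smul_monomial, mul_comm]
  | single_add i b m hi _ ih =>
    rw [diffOperator_monomial_single_add, Module.End.mul_apply, ih, pderiv_pow_apply_monomial,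
      Finsupp.tsub_apply, Finsupp.notMem_support_iff.mp hi, tsub_zero, tsub_tsub, add_comm m,
      Finsupp.prod_add_index_of_disjoint, Finsupp.prod_single_index (by simp)]
    · push_cast
      congr 1
      ring
    · exact Finset.disjoint_of_subset_left Finsupp.support_single_subset
        (Finset.disjoint_singleton_left.mpr hi)

open Classical in
theorem coeff_zero_diffOperator_monomial_apply_monomial (m s : σ →₀ ℕ) (a c : R) :
    coeff 0 (diffOperator R σ (monomial m a) (monomial s c)) =
      if s = m then (m.prod fun _ e => e.factorial : ℕ) * a * c else 0 := by
  rw [diffOperator_monomial_apply_monomial, coeff_monomial]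
  split_ifs with hsub heq heq
  · subst heq
    rw [Finsupp.prod_congr fun i _ => Nat.descFactorial_self (s i)]
  · obtain ⟨i, hi⟩ := (Finsupp.lt_def.mp (lt_of_le_of_ne (tsub_eq_zero_iff_le.mp hsub) heq)).2
    have hzero : (m.prod fun i e => (s i).descFactorial e) = 0 :=
      Finset.prod_eq_zero (Finsupp.mem_support_iff.mpr (by omega))
        (Nat.descFactorial_eq_zero_iff_lt.mpr hi)
    simp [hzero]
  · exact absurd (by rw [heq, tsub_self]) hsub
  · rfl

variable (R σ) in
noncomputable def apolarPairing : MvPolynomial σ R →ₗ[R] MvPolynomial σ R →ₗ[R] R :=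
  (diffOperator R σ).toLinearMap.compr₂ (lcoeff R 0)

theorem apolarPairing_apply (f G : MvPolynomial σ R) :
    apolarPairing R σ f G = coeff 0 (diffOperator R σ f G) := rfl

def apolarIdeal (F : MvPolynomial σ R) : Ideal (MvPolynomial σ R) where
  carrier := {f | diffOperator R σ f F = 0}
  add_mem' {f g} hf hg := by simp_all
  zero_mem' := by simp
  smul_mem' c f hf := by simp_all

theorem mem_apolarIdeal {F f : MvPolynomial σ R} : f ∈ apolarIdeal F ↔ diffOperator R σ f F = 0 :=
  Iff.rfl

variable [Fintype σ]

noncomputable def linearForm (z : σ → R) : MvPolynomial σ R := ∑ j, C (z j) * X j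

theorem pderiv_linearForm (z : σ → R) (j : σ) : pderiv j (linearForm z) = C (z j) := by
  classical
  simp [linearForm, pderiv_X, Pi.single_apply]

theorem isHomogeneous_linearForm_pow (z : σ → R) (D : ℕ) : (linearForm z ^ D).IsHomogeneous D := by
  have h := (IsHomogeneous.sum Finset.univ _ 1 fun j _ => isHomogeneous_C_mul_X (z j) j).pow D
  rwa [one_mul] at h

theorem pderiv_pow_apply_linearForm_pow (z : σ → R) (j : σ) (k D : ℕ) :
    ((pderiv j).toLinearMap ^ k) (linearForm z ^ D) =
      ((D.descFactorial k : R) * z j ^ k) • linearForm z ^ (D - k) := by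
  induction k with
  | zero => simp
  | succ k ih =>
    rw [pow_succ', Module.End.mul_apply, ih, map_smul, Derivation.coeFn_coe, pderiv_pow,
      pderiv_linearForm, Nat.descFactorial_succ, Nat.sub_sub]
    simp only [smul_eq_C_mul, Nat.cast_mul, ← map_natCast (C : R →+* MvPolynomial σ R), map_mul,
      map_pow]
    ring

theorem diffOperator_monomial_apply_linearForm_pow (m : σ →₀ ℕ) (a : R) (z : σ → R) (D : ℕ) :
    diffOperator R σ (monomial m a) (linearForm z ^ D) =
      ((D.descFactorial m.degree : R) * eval z (monomial m a)) • linearForm z ^ (D - m.degree) := by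
  induction m using Finsupp.induction with
  | zero => simp [Algebra.algebraMap_eq_smul_one]
  | single_add i b m _ _ ih =>
    have hdesc := Nat.descFactorial_mul_descFactorial (n := D) (Nat.le_add_left m.degree b)
    rw [Nat.add_sub_cancel] at hdesc
    rw [diffOperator_monomial_single_add, Module.End.mul_apply, ih, map_smul,
      pderiv_pow_apply_linearForm_pow, smul_smul, monomial_single_add, map_mul, map_pow, eval_X,
      map_add, Finsupp.degree_single, ← hdesc, Nat.sub_sub, add_comm m.degree]
    push_cast
    congr 1
    ring

theorem IsHomogeneous.diffOperator_apply_linearForm_pow {f : MvPolynomial σ R} {e : ℕ}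
    (hf : f.IsHomogeneous e) (z : σ → R) (D : ℕ) :
    diffOperator R σ f (linearForm z ^ D) =
      ((D.descFactorial e : R) * eval z f) • linearForm z ^ (D - e) := by
  conv_lhs => rw [f.as_sum]
  rw [map_sum, LinearMap.sum_apply]
  conv_rhs => rw [f.as_sum, map_sum, Finset.mul_sum, Finset.sum_smul]
  refine Finset.sum_congr rfl fun m hm => ?_
  rw [diffOperator_monomial_apply_linearForm_pow, hf.degree_eq_of_mem_support hm]

theorem IsHomogeneous.apolarPairing_linearForm_pow {f : MvPolynomial σ R} {D : ℕ}
    (hf : f.IsHomogeneous D) (z : σ → R) :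
    apolarPairing R σ f (linearForm z ^ D) = D.factorial * eval z f := by
  rw [apolarPairing_apply, hf.diffOperator_apply_linearForm_pow, Nat.descFactorial_self,
    Nat.sub_self, pow_zero, smul_eq_C_mul, mul_one, coeff_zero_C]

theorem diffOperator_apply_eq_zero_of_mem_span {ι : Type*} (Z : ι → σ → R)
    {f : MvPolynomial σ R} {e D : ℕ} (hf : f.IsHomogeneous e) (hZ : ∀ i, eval (Z i) f = 0)
    {F : MvPolynomial σ R} (hF : F ∈ Submodule.span R (Set.range fun i => linearForm (Z i) ^ D)) :
    diffOperator R σ f F = 0 := by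
  refine (Submodule.span_le (p := LinearMap.ker (diffOperator R σ f))).mpr ?_ hF
  rintro _ ⟨i, rfl⟩
  simp [hf.diffOperator_apply_linearForm_pow, hZ i]

end CommSemiring

section Field

variable {k : Type*} [Field k] [CharZero k] {σ : Type*} [Fintype σ]

theorem exists_isHomogeneous_apolarPairing_eq (φ : MvPolynomial σ k →ₗ[k] k) (D : ℕ) :
    ∃ f : MvPolynomial σ k, f.IsHomogeneous D ∧
      ∀ G : MvPolynomial σ k, G.IsHomogeneous D → apolarPairing k σ f G = φ G := by
  classical
  have hfact (m : σ →₀ ℕ) : ((m.prod fun _ e => e.factorial : ℕ) : k) ≠ 0 :=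
    Nat.cast_ne_zero.mpr (Finset.prod_ne_zero_iff.mpr fun i _ => Nat.factorial_ne_zero _)
  let S : Finset (σ →₀ ℕ) := Finset.univ.finsuppAntidiag D
  have hS (m : σ →₀ ℕ) : m ∈ S ↔ m.degree = D := by simp [S, Finsupp.degree_eq_sum]
  let f := ∑ m ∈ S, monomial m (φ (monomial m 1) / (m.prod fun _ e => e.factorial : ℕ))
  have hf_monomial (s : σ →₀ ℕ) (hs : s.degree = D) (c : k) :
      apolarPairing k σ f (monomial s c) = φ (monomial s c) := by
    have hsc : monomial s c = c • monomial s 1 := by rw [smul_monomial, smul_eq_mul, mul_one]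
    simp only [f, map_sum, LinearMap.sum_apply, apolarPairing_apply,
      coeff_zero_diffOperator_monomial_apply_monomial, Finset.sum_ite_eq, if_pos ((hS s).mpr hs)]
    rw [mul_div_cancel₀ _ (hfact s), hsc, map_smul, smul_eq_mul, mul_comm]
  refine ⟨f, IsHomogeneous.sum _ _ _ fun m hm => isHomogeneous_monomial _ ((hS m).mp hm),
    fun G hG => ?_⟩
  conv_lhs => rw [G.as_sum]
  conv_rhs => rw [G.as_sum]
  simp only [map_sum]
  exact Finset.sum_congr rfl fun s hs => hf_monomial s (hG.degree_eq_of_mem_support hs) _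

theorem mem_span_linearForm_pow_of_apolarPairing_eq_zero {ι : Type*} (Z : ι → σ → k) {F : MvPolynomial σ k}
    {D : ℕ} (hF : F.IsHomogeneous D)
    (h : ∀ f : MvPolynomial σ k, f.IsHomogeneous D → (∀ i, eval (Z i) f = 0) →
      apolarPairing k σ f F = 0) :
    F ∈ Submodule.span k (Set.range fun i => linearForm (Z i) ^ D) := by
  by_contra hspan
  obtain ⟨φ, hφF, hφ⟩ := Submodule.exists_dual_map_eq_bot_of_notMem hspan inferInstance
  obtain ⟨f, hf, hfφ⟩ := exists_isHomogeneous_apolarPairing_eq φ D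
  refine hφF ((hfφ F hF).symm.trans (h f hf fun i => ?_))
  have hφi : φ (linearForm (Z i) ^ D) = 0 :=
    (Submodule.eq_bot_iff _).mp hφ _ (Submodule.mem_map_of_mem (Submodule.subset_span ⟨i, rfl⟩))
  have hpow := hfφ _ (isHomogeneous_linearForm_pow (Z i) D)
  rw [hf.apolarPairing_linearForm_pow, hφi] at hpow
  exact (mul_eq_zero.mp hpow).resolve_left (Nat.cast_ne_zero.mpr (Nat.factorial_ne_zero D))

end Field

end MvPolynomial

theorem diffOp_eq_diffOperator {k : Type} [Field k] {n : ℕ} (f F : MvPolynomial (Fin (n + 1)) k) :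
    diffOp k f F = diffOperator k (Fin (n + 1)) f F := by
  conv_rhs => rw [f.as_sum]
  rw [map_sum, LinearMap.sum_apply]
  refine Finset.sum_congr rfl fun m _ => ?_
  rw [← mul_one (coeff m f), ← smul_eq_mul, ← smul_monomial, map_smul, LinearMap.smul_apply,
    diffOperator_monomial_one]
  rfl

theorem vanishingIdealPts_le_apolarIdeal {k : Type} [Field k] {n r D : ℕ}
    {Z : Fin r → Fin (n + 1) → k} {F : MvPolynomial (Fin (n + 1)) k}
    (hF : F ∈ Submodule.span k (Set.range fun i => linearForm (Z i) ^ D)) :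
    vanishingIdealPts k Z ≤ apolarIdeal F :=
  Ideal.span_le.mpr fun _ ⟨⟨_, he⟩, hZ⟩ =>
    mem_apolarIdeal.mpr (diffOperator_apply_eq_zero_of_mem_span Z he hZ hF)

theorem apolarity_lemma_general (k : Type) [Field k] [CharZero k] (n r D : ℕ)
    (Z : Fin r → (Fin (n + 1) → k))
    (F : MvPolynomial (Fin (n + 1)) k) (hF : F.IsHomogeneous D) :
    (∃ c : Fin r → k,
        F = ∑ i, C (c i) * (∑ j, C (Z i j) * X j) ^ D) ↔
      ∀ f ∈ vanishingIdealPts k Z, diffOp k f F = 0 := by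
  have hWaring : (∃ c : Fin r → k, F = ∑ i, C (c i) * (∑ j, C (Z i j) * X j) ^ D) ↔
      F ∈ Submodule.span k (Set.range fun i => linearForm (Z i) ^ D) := by
    simp only [Submodule.mem_span_range_iff_exists_fun, C_mul', linearForm, eq_comm]
  simp only [hWaring, diffOp_eq_diffOperator]
  refine ⟨fun hspan f hf => mem_apolarIdeal.mp (vanishingIdealPts_le_apolarIdeal hspan hf),
    fun h => mem_span_linearForm_pow_of_apolarPairing_eq_zero Z hF fun f hf hZ => ?_⟩
  rw [apolarPairing_apply, h f (Ideal.subset_span ⟨⟨D, hf⟩, hZ⟩), coeff_zero]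

/-- Apolarity Lemma.  For a form `F` of degree `D` and points `z₁,…,z_r ∈ ℙⁿ` (represented by
nonzero vectors), `F` admits a Waring decomposition `F = Σ cᵢ (zᵢ·y)^D` if and only if the
vanishing ideal `I(Z)` is contained in the apolar ideal `Ann(F) = {f : f(∂)F = 0}`. -/
theorem apolarity_lemma (k : Type) [Field k] [IsAlgClosed k] [CharZero k] (n r D : ℕ)
    (Z : Fin r → (Fin (n + 1) → k)) (hZ0 : ∀ i, Z i ≠ 0)
    (F : MvPolynomial (Fin (n + 1)) k) (hF : F.IsHomogeneous D) :
    (∃ c : Fin r → k,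
        F = ∑ i, C (c i) * (∑ j, C (Z i j) * X j) ^ D) ↔
      ∀ f ∈ vanishingIdealPts k Z, diffOp k f F = 0 :=
  apolarity_lemma_general k n r D Z F hF
end

section
/- Let I be the monomial ideal ⟨x^3 y^2, y^3 z^2, z^3 x^2, x^2 y^2 z^2⟩ in S = k[x, y, z]. Then S/I has Hilbert function h_{S/I}(t) = min(binom(t+2, 2), 18) for all t ≥ 0, and the chopped ideal J = ⟨x^3 y^2, y^3 z^2, z^3 x^2⟩ (generated by the degree-5 part of I) satisfies h_{S/J}(6) = 19 and h_{S/J}(7) = 18. -/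
/-!
For a monomial ideal `I`, the monomials outside `I` form a basis of `S/I`, so `h_{S/I}(t)` counts
the exponent vectors of degree `t` that dominate no generator's exponent vector. Up to degree `4`
no monomial lies in `I`, and for the chopped ideal in degrees `6` and `7` the count is a finite
check. In degree `t ≥ 5` a monomial outside `I` is `x^a y^b z^c` with `b ≤ 1, c ≤ 2`, or one of
its two cyclic rotations; these three families are disjoint and each has `2 · 3 = 6` members.
-/

open MvPolynomial

open Finset Finset.Nat Module

namespace MvPolynomial

variable {σ R : Type*}

section CommSemiring

variable [CommSemiring R]

theorem restrictScalars_span_monomial_image (E : Set (σ →₀ ℕ)) :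
    (Ideal.span ((fun e => monomial e (1 : R)) '' E)).restrictScalars R =
      restrictSupport R {d | ∃ e ∈ E, e ≤ d} := by
  ext p
  simp [mem_ideal_span_monomial_image, mem_restrictSupport_iff, Set.subset_def]

theorem homogeneousSubmodule_eq_restrictSupport (t : ℕ) :
    homogeneousSubmodule σ R t = restrictSupport R {d | d.degree = t} :=
  homogeneousSubmodule_eq_finsupp_supported σ R t

theorem restrictSupport_inter (s s' : Set (σ →₀ ℕ)) :
    restrictSupport R (s ∩ s') = restrictSupport R s ⊓ restrictSupport R s' := by
  ext p
  simp [mem_restrictSupport_iff]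

theorem monomial_equivFunOnFinite_symm_one [Fintype σ] (e : σ → ℕ) :
    monomial (Finsupp.equivFunOnFinite.symm e) (1 : R) = ∏ i, X i ^ e i := by
  rw [monomial_eq, C_1, one_mul, Finsupp.prod_fintype _ _ fun _ => pow_zero _]
  rfl

end CommSemiring

theorem finrank_restrictSupport [CommRing R] [Nontrivial R] (s : Set (σ →₀ ℕ)) :
    finrank R (restrictSupport R s) = s.ncard :=
  finrank_eq_nat_card_basis (basisRestrictSupport R s)

end MvPolynomial

section HilbertFunction

variable {k : Type} [Field k] {n : ℕ}

theorem hilbFn_span_monomial (E : Set (Fin (n + 1) →₀ ℕ)) (t : ℕ) :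
    hilbFn k (Ideal.span ((fun e => monomial e (1 : k)) '' E)) t =
      {d | d.degree = t ∧ ∀ e ∈ E, ¬ e ≤ d}.ncard := by
  rw [hilbFn, restrictScalars_span_monomial_image, homogeneousSubmodule_eq_restrictSupport,
    ← restrictSupport_inter, finrank_restrictSupport, finrank_restrictSupport,
    ← Set.ncard_sdiff' Set.inter_subset_right (Finsupp.finite_of_degree_eq t)]
  congr 1
  ext d
  simp

theorem hilbFn_span_prod_X_pow (E : Finset (Fin (n + 1) → ℕ)) (t : ℕ) :
    hilbFn k (Ideal.span ((fun e : Fin (n + 1) → ℕ => ∏ i, X i ^ e i) '' E)) t =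
      #{d ∈ antidiagonalTuple (n + 1) t | ∀ e ∈ E, ∃ i, d i < e i} := by
  have hE : (fun e : Fin (n + 1) → ℕ => ∏ i, X i ^ e i) '' E =
      (fun e => monomial e (1 : k)) '' (Finsupp.equivFunOnFinite.symm '' E) := by
    simp [Set.image_image, monomial_equivFunOnFinite_symm_one]
  rw [← Set.ncard_coe_finset,
    ← Set.ncard_image_of_injective _ Finsupp.equivFunOnFinite.symm.injective,
    Equiv.image_symm_eq_preimage, hE, hilbFn_span_monomial]
  congr 1
  ext d
  simp only [Set.mem_ofPred_eq, Set.mem_preimage, coe_filter, mem_antidiagonalTuple,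
    Finsupp.degree_eq_sum, Set.forall_mem_image, Finsupp.le_def, not_forall, not_le]
  rfl

end HilbertFunction

theorem card_filter_antidiagonalTuple_comp_perm {m : ℕ} (σ : Equiv.Perm (Fin m))
    (P : (Fin m → ℕ) → Prop) [DecidablePred P] (t : ℕ) :
    #{d ∈ antidiagonalTuple m t | P (d ∘ σ)} = #{d ∈ antidiagonalTuple m t | P d} := by
  refine card_nbij' (· ∘ σ) (· ∘ σ.symm) (fun d hd => ?_) (fun d hd => ?_)
    (fun d _ => ?_) (fun d _ => ?_)
  all_goals simp_all [mem_antidiagonalTuple, Function.comp_assoc, Equiv.sum_comp]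

theorem card_filter_antidiagonalTuple_three_le_le {p q t : ℕ} (h : p + q ≤ t) :
    #{d ∈ antidiagonalTuple 3 t | d 1 ≤ p ∧ d 2 ≤ q} = (p + 1) * (q + 1) := by
  rw [← card_range (p + 1), ← card_range (q + 1), ← card_product]
  refine card_nbij' (fun d => (d 1, d 2)) (fun uv => ![t - uv.1 - uv.2, uv.1, uv.2])
    (fun d hd => ?_) (fun uv huv => ?_) (fun d hd => ?_) (fun uv huv => ?_)
  all_goals simp_all [mem_antidiagonalTuple, Fin.sum_univ_three]
  · omega
  · funext i
    fin_cases i <;> (simp; try omega)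

theorem forall_exists_lt_iff_of_five_le {d : Fin 3 → ℕ} (hd : 5 ≤ ∑ i, d i) :
    (∀ e ∈ ({![3, 2, 0], ![0, 3, 2], ![2, 0, 3], ![2, 2, 2]} : Finset (Fin 3 → ℕ)),
        ∃ i, d i < e i) ↔
      (d 1 ≤ 1 ∧ d 2 ≤ 2) ∨ (d 2 ≤ 1 ∧ d 0 ≤ 2) ∨ (d 0 ≤ 1 ∧ d 1 ≤ 2) := by
  have := hd.trans_eq (Fin.sum_univ_three d)
  simp [Fin.exists_fin_succ]
  omega

theorem card_standard_of_five_le {t : ℕ} (ht : 5 ≤ t) :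
    #{d ∈ antidiagonalTuple 3 t | ∀ e ∈ ({![3, 2, 0], ![0, 3, 2], ![2, 0, 3], ![2, 2, 2]} :
        Finset (Fin 3 → ℕ)), ∃ i, d i < e i} = 18 := by
  rw [filter_congr fun d hd => forall_exists_lt_iff_of_five_le
    ((mem_antidiagonalTuple.1 hd).symm ▸ ht), filter_or,
    card_union_of_disjoint (disjoint_filter.2 fun _ hd _ _ => by
      rw [mem_antidiagonalTuple, Fin.sum_univ_three] at hd; omega), filter_or,
    card_union_of_disjoint (disjoint_filter.2 fun _ hd _ _ => by
      rw [mem_antidiagonalTuple, Fin.sum_univ_three] at hd; omega)]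
  have hA : #{d ∈ antidiagonalTuple 3 t | d 1 ≤ 1 ∧ d 2 ≤ 2} = 6 :=
    card_filter_antidiagonalTuple_three_le_le (by omega)
  -- At coordinates `1, 2`, `d ∘ finRotate 3` reads `d 2, d 0` and `d ∘ (finRotate 3).symm`
  -- reads `d 0, d 1`.
  have hB : #{d ∈ antidiagonalTuple 3 t | d 2 ≤ 1 ∧ d 0 ≤ 2} = 6 :=
    (card_filter_antidiagonalTuple_comp_perm (finRotate 3) (fun d => d 1 ≤ 1 ∧ d 2 ≤ 2)
      t).trans hA
  have hC : #{d ∈ antidiagonalTuple 3 t | d 0 ≤ 1 ∧ d 1 ≤ 2} = 6 :=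
    (card_filter_antidiagonalTuple_comp_perm (finRotate 3).symm (fun d => d 1 ≤ 1 ∧ d 2 ≤ 2)
      t).trans hA
  rw [hA, hB, hC]

/-- In `S = k[x, y, z]` the monomial ideal `I = (x³y², y³z², z³x², x²y²z²)` has the generic
Hilbert function of 18 points, `h_{S/I}(t) = min (C(t+2, 2)) 18`, and its chopped ideal
`J = (x³y², y³z², z³x²)` in degree `5` satisfies `h_{S/J}(6) = 19` and `h_{S/J}(7) = 18`. -/
theorem monomial_ideal_18_points (k : Type) [Field k] :
    (∀ t : ℕ, hilbFn k (Ideal.span {(X 0 : MvPolynomial (Fin (2 + 1)) k) ^ 3 * X 1 ^ 2,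
        X 1 ^ 3 * X 2 ^ 2, X 2 ^ 3 * X 0 ^ 2, X 0 ^ 2 * X 1 ^ 2 * X 2 ^ 2}) t =
        min (Nat.choose (t + 2) 2) 18) ∧
    hilbFn k (Ideal.span {(X 0 : MvPolynomial (Fin (2 + 1)) k) ^ 3 * X 1 ^ 2,
        X 1 ^ 3 * X 2 ^ 2, X 2 ^ 3 * X 0 ^ 2}) 6 = 19 ∧
    hilbFn k (Ideal.span {(X 0 : MvPolynomial (Fin (2 + 1)) k) ^ 3 * X 1 ^ 2,
        X 1 ^ 3 * X 2 ^ 2, X 2 ^ 3 * X 0 ^ 2}) 7 = 18 := by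
  have hI : ({X 0 ^ 3 * X 1 ^ 2, X 1 ^ 3 * X 2 ^ 2, X 2 ^ 3 * X 0 ^ 2,
      X 0 ^ 2 * X 1 ^ 2 * X 2 ^ 2} : Set (MvPolynomial (Fin (2 + 1)) k)) =
        (fun e : Fin 3 → ℕ => ∏ i, X i ^ e i) ''
          ({![3, 2, 0], ![0, 3, 2], ![2, 0, 3], ![2, 2, 2]} : Finset (Fin 3 → ℕ)) := by
    simp [Set.image_insert_eq, Fin.prod_univ_three, mul_comm]
  have hJ : ({X 0 ^ 3 * X 1 ^ 2, X 1 ^ 3 * X 2 ^ 2, X 2 ^ 3 * X 0 ^ 2} :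
      Set (MvPolynomial (Fin (2 + 1)) k)) =
        (fun e : Fin 3 → ℕ => ∏ i, X i ^ e i) ''
          ({![3, 2, 0], ![0, 3, 2], ![2, 0, 3]} : Finset (Fin 3 → ℕ)) := by
    simp [Set.image_insert_eq, Fin.prod_univ_three, mul_comm]
  refine ⟨fun t => ?_, ?_, ?_⟩ <;> simp only [hI, hJ, hilbFn_span_prod_X_pow]
  · rcases le_or_gt t 4 with ht | ht
    · interval_cases t <;> decide
    · rw [card_standard_of_five_le ht, min_eq_right]
      calc 18 ≤ Nat.choose 7 2 := by decide
        _ ≤ Nat.choose (t + 2) 2 := Nat.choose_le_choose 2 (by omega)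
  · decide
  · decide
end

section
/- For all integers n ≥ 2 and d ≥ 1, the expected-syzygy alternating sum at e = (n-1)d - (n+1) equals the expected codimension: Σ_{k≥1} (-1)^{k+1} · binom(n + d + e - kd, n) · binom(n+1, k) = binom(n + d + e, n) - (binom(n+d, n) - (n+1)), where e = (n-1)d - (n+1) and binom(a,n) = 0 for a < n. -/
/-!
Write `e' = n + d + e = nd - 1`. For every integer `a`,
`n! C(a, n) = (a)_n - (-1)^n n! C(n - 1 - a, n)`, where `(a)_n` is the falling factorial:
for `a ≥ 0` the second term vanishes, and for `a < 0` reflecting the falling factorial gives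
`(a)_n = (-1)^n (n - 1 - a)_n`. The `(n+1)`-st forward difference of the degree-`n` polynomial
`x ↦ (e' - dx)_n` vanishes, so the alternating sum of the `C(e' - jd, n)` equals, up to sign, the
alternating sum of the reflected values `C(n - nd + jd, n)`. Of these only `j = n` and
`j = n + 1` survive, contributing `-(n + 1)` and `C(n + d, n)`.
-/

/-- `ichoose a n` is the binomial coefficient `C(a, n)` for an integer `a`, with the convention
that `C(a, n) = 0` for `a < 0` (and hence for all `a < n`). -/
def ichoose (a : ℤ) (n : ℕ) : ℤ := if a < 0 then 0 else (a.toNat.choose n : ℤ)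

open Finset Polynomial fwdDiff

lemma ichoose_eq_zero_of_lt {a : ℤ} {n : ℕ} (h : a < n) : ichoose a n = 0 := by
  unfold ichoose
  split_ifs with ha
  · rfl
  · rw [Nat.choose_eq_zero_of_lt (by omega), Nat.cast_zero]

lemma ichoose_natCast (m n : ℕ) : ichoose m n = m.choose n := by
  simp [ichoose]

lemma factorial_mul_ichoose_of_nonneg {a : ℤ} (n : ℕ) (h : 0 ≤ a) :
    (n.factorial : ℤ) * ichoose a n = (descPochhammer ℤ n).eval a := by
  lift a to ℕ using h
  rw [ichoose_natCast, descPochhammer_eval_eq_descFactorial,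
    Nat.descFactorial_eq_factorial_mul_choose, Nat.cast_mul]

lemma descPochhammer_eval_eq_factorial_mul_ichoose_add (n : ℕ) (a : ℤ) :
    (descPochhammer ℤ n).eval a =
      n.factorial * ichoose a n + (-1) ^ n * n.factorial * ichoose (n - 1 - a) n := by
  rcases lt_or_ge a 0 with ha | ha
  · have hreflect : (descPochhammer ℤ n).eval a
        = (-1) ^ n * (descPochhammer ℤ n).eval ((n : ℤ) - 1 - a) := by
      rw [descPochhammer_eval_eq_ascPochhammer, show a - n + 1 = -((n : ℤ) - 1 - a) by ring,
        ascPochhammer_eval_neg_eq_descPochhammer]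
    rw [hreflect, ← factorial_mul_ichoose_of_nonneg n (by omega),
      ichoose_eq_zero_of_lt (a := a) (by omega)]
    ring
  · rw [← factorial_mul_ichoose_of_nonneg n ha, ichoose_eq_zero_of_lt (a := n - 1 - a) (by omega)]
    ring

lemma sum_neg_one_pow_mul_choose_mul_eq_fwdDiff_iter {R : Type*} [CommRing R]
    (f : R → R) (N : ℕ) :
    ∑ k ∈ range (N + 1), (-1) ^ k * N.choose k * f k = (-1) ^ N * Δ_[1] ^[N] f 0 := by
  rw [fwdDiff_iter_eq_sum_shift, mul_sum]
  refine sum_congr rfl fun k hk => ?_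
  obtain ⟨m, rfl⟩ := Nat.exists_eq_add_of_le (Nat.lt_succ_iff.mp (mem_range.mp hk))
  have hsign : (-1 : R) ^ (k + m) * (-1) ^ m = (-1) ^ k := by
    rw [pow_add, mul_assoc, pow_mul_pow_eq_one m (by norm_num), mul_one]
  rw [Nat.add_sub_cancel_left, zsmul_eq_mul, nsmul_one, zero_add, ← hsign]
  push_cast
  ring

lemma fwdDiff_iter_ichoose_affine {n N : ℕ} (hN : n < N) (a b : ℤ) :
    Δ_[1] ^[N] (fun x => ichoose (a + b * x) n) =
      (-1) ^ (n + 1) • Δ_[1] ^[N] (fun x => ichoose (n - 1 - (a + b * x)) n) := by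
  set P := (descPochhammer ℤ n).comp (C b * X + C a)
  have hP : P.natDegree < N := by
    calc P.natDegree ≤ (descPochhammer ℤ n).natDegree * (C b * X + C a).natDegree :=
          natDegree_comp_le
      _ ≤ n * 1 := by
          rw [descPochhammer_natDegree]
          exact Nat.mul_le_mul_left n natDegree_linear_le
      _ < N := by omega
  have hsplit : P.eval = (n.factorial : ℤ) • (fun x => ichoose (a + b * x) n)
      + ((-1) ^ n * n.factorial : ℤ) • (fun x => ichoose (n - 1 - (a + b * x)) n) := by
    funext x
    simp only [P, Pi.add_apply, Pi.smul_apply, smul_eq_mul, eval_comp, eval_add, eval_mul,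
      eval_C, eval_X]
    rw [add_comm (b * x) a, descPochhammer_eval_eq_factorial_mul_ichoose_add]
  have hΔ := congrArg (Δ_[1] ^[N]) hsplit
  rw [fwdDiff_iter_eq_zero_of_degree_lt hP, fwdDiff_iter_add, fwdDiff_iter_const_smul,
    fwdDiff_iter_const_smul] at hΔ
  funext y
  have hy := congrFun hΔ y
  simp only [Pi.zero_apply, Pi.add_apply, Pi.smul_apply, smul_eq_mul] at hy ⊢
  refine mul_left_cancel₀ (Nat.cast_ne_zero.mpr n.factorial_ne_zero : (n.factorial : ℤ) ≠ 0) ?_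
  linear_combination -hy

lemma fwdDiff_iter_ichoose_eval_zero (m n : ℕ) {d : ℕ} (hd : 1 ≤ d) :
    Δ_[1] ^[m + 1] (fun x => ichoose (n - m * d + d * x) n) 0 =
      (n + d).choose n - (m + 1) := by
  rw [fwdDiff_iter_eq_sum_shift, sum_range_succ, sum_range_succ,
    sum_eq_zero fun k hk => ?_, zero_add]
  · have hlast : (n : ℤ) - m * d + d * (m + 1 : ℕ) = (n + d : ℕ) := by push_cast; ring
    have hnext : (n : ℤ) - m * d + d * m = n := by ring
    simp only [zero_add, nsmul_one, hlast, hnext, ichoose_natCast, Nat.choose_self,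
      Nat.choose_succ_self_right, Nat.sub_self, Nat.add_sub_cancel_left]
    push_cast
    ring
  · have hk : (k : ℤ) + 1 ≤ m := by exact_mod_cast mem_range.mp hk
    refine smul_eq_zero_of_right _ (ichoose_eq_zero_of_lt ?_)
    rw [zero_add, nsmul_one]
    nlinarith

theorem expected_syzygy_sum_at_gap_general (n d : ℕ) (hd : 1 ≤ d) :
    ∑ j ∈ Finset.Icc 1 (n + 1),
        (-1 : ℤ) ^ (j + 1) * ichoose ((n : ℤ) + d + (((n : ℤ) - 1) * d - ((n : ℤ) + 1)) - j * d) n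
          * (Nat.choose (n + 1) j : ℤ) =
      ichoose ((n : ℤ) + d + (((n : ℤ) - 1) * d - ((n : ℤ) + 1))) n
        - ((Nat.choose (n + d) n : ℤ) - ((n : ℤ) + 1)) := by
  set f : ℤ → ℤ := fun x => ichoose (n * d - 1 + (-d) * x) n
  have hf (x : ℤ) :
      ichoose ((n : ℤ) + d + (((n : ℤ) - 1) * d - ((n : ℤ) + 1)) - x * d) n = f x :=
    congrArg (ichoose · n) (by ring)
  have hf0 : ichoose ((n : ℤ) + d + (((n : ℤ) - 1) * d - ((n : ℤ) + 1))) n = f 0 := by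
    simpa using hf 0
  have hreflect : (fun x : ℤ => ichoose (n - 1 - (n * d - 1 + (-d) * x)) n) =
      fun x => ichoose (n - n * d + d * x) n := by
    funext x; ring_nf
  have hsum := sum_neg_one_pow_mul_choose_mul_eq_fwdDiff_iter f (n + 1)
  rw [fwdDiff_iter_ichoose_affine n.lt_succ_self, hreflect, Pi.smul_apply,
    fwdDiff_iter_ichoose_eval_zero n n hd, range_eq_Ico,
    sum_eq_sum_Ico_succ_bot (Nat.add_one_pos _), zero_add, Ico_add_one_right_eq_Icc] at hsum
  have hsign : (-1 : ℤ) ^ (n + 1) * (-1) ^ (n + 1) = 1 := pow_mul_pow_eq_one _ (by norm_num)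
  have hneg : ∑ j ∈ Icc 1 (n + 1), (-1 : ℤ) ^ (j + 1) * f j * (n + 1).choose j =
      -∑ j ∈ Icc 1 (n + 1), (-1) ^ j * (n + 1).choose j * f j := by
    rw [← sum_neg_distrib]
    exact sum_congr rfl fun j _ => by ring
  simp only [hf, hf0, hneg]
  simp only [pow_zero, Nat.choose_zero_right, Nat.cast_zero, smul_eq_mul] at hsum
  linear_combination -hsum - ((n + d).choose n - (n + 1) : ℤ) * hsign

/-- For all `n ≥ 2` and `d ≥ 1`, with `e = (n-1)d - (n+1)`, the expected-syzygy alternating sum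
equals the expected codimension:
`Σ_{k≥1} (-1)^{k+1} C(n+d+e-kd, n) C(n+1, k) = C(n+d+e, n) - (C(n+d, n) - (n+1))`. -/
theorem expected_syzygy_sum_at_gap (n d : ℕ) (hn : 2 ≤ n) (hd : 1 ≤ d) :
    ∑ j ∈ Finset.Icc 1 (n + 1),
        (-1 : ℤ) ^ (j + 1) * ichoose ((n : ℤ) + d + (((n : ℤ) - 1) * d - ((n : ℤ) + 1)) - j * d) n
          * (Nat.choose (n + 1) j : ℤ) =
      ichoose ((n : ℤ) + d + (((n : ℤ) - 1) * d - ((n : ℤ) + 1))) n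
        - ((Nat.choose (n + d) n : ℤ) - ((n : ℤ) + 1)) :=
  expected_syzygy_sum_at_gap_general n d hd
end
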